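/- Let $\mathcal{L}_{\mathcal{D}}(h, h') = \mathbb{E}_{x \sim \mathcal{D}}[|h(x)-h'(x)|]$ be the disagreement loss. Let $h^*$ be the ground-truth labeling function, $\hat{\mathcal{D}}_g$ the global distribution, $\mathcal{D}_k$ and $\mathcal{D}_{syn}$ two source distributions, and $\alpha \in [0,1]$. Define the mixed loss $\mathcal{L}_{mix}(h) = \alpha \mathcal{L}_{\mathcal{D}_k}(h, h^*) + (1-\alpha)\mathcal{L}_{\mathcal{D}_{syn}}(h, h^*)$. Suppose there exist $\lambda_k = \min_{h' \in \hat{\mathcal{H}}}\{ \mathcal{L}_{\hat{\mathcal{D}}_g}(h', h^*) + \mathcal{L}_{\mathcal{D}_k}(h', h^*) \}$ and $\lambda_{k,syn} = \min_{h' \in \hat{\mathcal{H}}}\{ \mathcal{L}_{\hat{\mathcal{D}}_g}(h', h^*) + \mathcal{L}_{\mathcal{D}_{syn}}(h', h^*) \}$, and let $d_{\mathcal{G}}(\cdot, \cdot)$ denote the discrepancy distance satisfying $|\mathcal{L}_{\mathcal{D}}(h, h') - \mathcal{L}_{\mathcal{D}'}(h, h')| \le d_{\mathcal{G}}(\mathcal{D},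 \mathcal{D}')$ for all $h, h' \in \hat{\mathcal{H}}$. Then for all $h \in \hat{\mathcal{H}}$: $|\mathcal{L}_{\hat{\mathcal{D}}_g}(h, h^*) - \mathcal{L}_{mix}(h)| \le \alpha[\lambda_k + d_{\mathcal{G}}(\mathcal{D}_k, \hat{\mathcal{D}}_g)] + (1-\alpha)[\lambda_{k,syn} + d_{\mathcal{G}}(\mathcal{D}_{syn}, \hat{\mathcal{D}}_g)]$. -/
import Mathlib


open MeasureTheory

theorem stmt_3 {X : Type*} [MeasurableSpace X]
    (H : Set (X → ℝ)) (hstar : X → ℝ)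
    (Dg Dk Dsyn : Measure X)
    [IsProbabilityMeasure Dg] [IsProbabilityMeasure Dk] [IsProbabilityMeasure Dsyn]
    (L : Measure X → (X → ℝ) → (X → ℝ) → ℝ)
    (hL : ∀ D f g, L D f g = ∫ x, |f x - g x| ∂D)
    (hint : ∀ D ∈ ({Dg, Dk, Dsyn} : Set (Measure X)), ∀ f ∈ insert hstar H,
      ∀ g ∈ insert hstar H, Integrable (fun x => |f x - g x|) D)
    (α : ℝ) (hα : α ∈ Set.Icc (0 : ℝ) 1)
    (lamk lamsyn : ℝ)
    (hlamk : IsLeast ((fun h' => L Dg h' hstar + L Dk h' hstar) '' H) lamk)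
    (hlamsyn : IsLeast ((fun h' => L Dg h' hstar + L Dsyn h' hstar) '' H) lamsyn)
    (dG : Measure X → Measure X → ℝ)
    (hdG : ∀ D D' : Measure X, ∀ h ∈ H, ∀ h' ∈ H, |L D h h' - L D' h h'| ≤ dG D D') :
    ∀ h ∈ H,
      |L Dg h hstar - (α * L Dk h hstar + (1 - α) * L Dsyn h hstar)| ≤
        α * (lamk + dG Dk Dg) + (1 - α) * (lamsyn + dG Dsyn Dg) := by
  intro h hh
  obtain ⟨hα0, hα1⟩ := hα
  have hmemDg : Dg ∈ ({Dg, Dk, Dsyn} : Set (Measure X)) := by simp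
  have hmemDk : Dk ∈ ({Dg, Dk, Dsyn} : Set (Measure X)) := by simp
  have hmemDsyn : Dsyn ∈ ({Dg, Dk, Dsyn} : Set (Measure X)) := by simp
  have hsym : ∀ D f g, L D f g = L D g f := by
    intro D f g
    rw [hL, hL]
    congr 1; funext x; exact abs_sub_comm _ _
  have htri : ∀ D ∈ ({Dg, Dk, Dsyn} : Set (Measure X)),
      ∀ f ∈ insert hstar H, ∀ g ∈ insert hstar H, ∀ k ∈ insert hstar H,
      L D f k ≤ L D f g + L D g k := by
    intro D hD f hf g hg k hk
    rw [hL, hL, hL]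
    calc ∫ x, |f x - k x| ∂D ≤ ∫ x, (|f x - g x| + |g x - k x|) ∂D := by
          apply integral_mono (hint D hD f hf k hk)
            ((hint D hD f hf g hg).add (hint D hD g hg k hk))
          intro x
          exact abs_sub_le _ _ _
      _ = _ := integral_add (hint D hD f hf g hg) (hint D hD g hg k hk)
  have key : ∀ D ∈ ({Dg, Dk, Dsyn} : Set (Measure X)),
      ∀ h0 ∈ H, |L Dg h hstar - L D h hstar| ≤
        (L Dg h0 hstar + L D h0 hstar) + dG D Dg := by
    intro D hD h0 hh0
    have hhm : h ∈ insert hstar H := Set.mem_insert_of_mem _ hh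
    have hh0m : h0 ∈ insert hstar H := Set.mem_insert_of_mem _ hh0
    have hsm : hstar ∈ insert hstar H := Set.mem_insert _ _
    have hd := hdG D Dg h hh h0 hh0
    rw [abs_sub_le_iff] at hd ⊢
    constructor
    · have t1 : L Dg h hstar ≤ L Dg h h0 + L Dg h0 hstar := htri Dg hmemDg h hhm h0 hh0m hstar hsm
      have t2 : L Dg h h0 - L D h h0 ≤ dG D Dg := hd.2
      have t3 : L D h h0 ≤ L D h hstar + L D hstar h0 := htri D hD h hhm hstar hsm h0 hh0m
      have t4 := hsym D hstar h0
      linarith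
    · have t1 : L D h hstar ≤ L D h h0 + L D h0 hstar := htri D hD h hhm h0 hh0m hstar hsm
      have t2 : L D h h0 - L Dg h h0 ≤ dG D Dg := hd.1
      have t3 : L Dg h h0 ≤ L Dg h hstar + L Dg hstar h0 := htri Dg hmemDg h hhm hstar hsm h0 hh0m
      have t4 := hsym Dg hstar h0
      linarith
  obtain ⟨h0k, hh0k, hvk⟩ := hlamk.1
  obtain ⟨h0s, hh0s, hvs⟩ := hlamsyn.1
  have hvk' : L Dg h0k hstar + L Dk h0k hstar = lamk := hvk
  have hvs' : L Dg h0s hstar + L Dsyn h0s hstar = lamsyn := hvs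
  have k1 := key Dk hmemDk h0k hh0k
  have k2 := key Dsyn hmemDsyn h0s hh0s
  have e : L Dg h hstar - (α * L Dk h hstar + (1 - α) * L Dsyn h hstar)
      = α * (L Dg h hstar - L Dk h hstar) + (1 - α) * (L Dg h hstar - L Dsyn h hstar) := by ring
  rw [e]
  calc |α * (L Dg h hstar - L Dk h hstar) + (1 - α) * (L Dg h hstar - L Dsyn h hstar)|
      ≤ |α * (L Dg h hstar - L Dk h hstar)| + |(1 - α) * (L Dg h hstar - L Dsyn h hstar)| :=
        abs_add_le _ _
    _ = α * |L Dg h hstar - L Dk h hstar| + (1 - α) * |L Dg h hstar - L Dsyn h hstar| := by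
        rw [abs_mul, abs_mul, abs_of_nonneg hα0, abs_of_nonneg (show (0:ℝ) ≤ 1 - α by linarith)]
    _ ≤ α * (lamk + dG Dk Dg) + (1 - α) * (lamsyn + dG Dsyn Dg) := by
        have b1 : |L Dg h hstar - L Dk h hstar| ≤ lamk + dG Dk Dg := by linarith
        have b2 : |L Dg h hstar - L Dsyn h hstar| ≤ lamsyn + dG Dsyn Dg := by linarith
        have c1 := mul_le_mul_of_nonneg_left b1 hα0
        have c2 := mul_le_mul_of_nonneg_left b2 (by linarith : (0:ℝ) ≤ 1 - α)
        linarith
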